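/- For an involution y in S_n, the set of reduced involution words of y equals the disjoint union over atoms w ∈ A(y) of the sets of reduced words of w. -/

import Mathlib

open scoped Classical

noncomputable section

/-- The simple transposition `s_i` in `S_n` (0-indexed: swaps `i` and `i+1`). -/
def simpleT (n i : ℕ) : Equiv.Perm (Fin n) :=
  if h : i + 1 < n then Equiv.swap ⟨i, Nat.lt_of_succ_lt h⟩ ⟨i + 1, h⟩ else 1

/-- The product of the word `l` of simple transpositions. -/
def wordProd (n : ℕ) (l : List ℕ) : Equiv.Perm (Fin n) :=
  (l.map (simpleT n)).prod

/-- The Coxeter length of a permutation: minimal length of a word of simple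
transpositions with product `w`. -/
def len (n : ℕ) (w : Equiv.Perm (Fin n)) : ℕ :=
  sInf {p | ∃ l : List ℕ, l.length = p ∧ wordProd n l = w}

/-- One step of the (right) Demazure / 0-Hecke product: `w ∘ s_i`. -/
def demStepR (n : ℕ) (w : Equiv.Perm (Fin n)) (i : ℕ) : Equiv.Perm (Fin n) :=
  if len n w < len n (w * simpleT n i) then w * simpleT n i else w

/-- One step of the (left) Demazure / 0-Hecke product: `s_i ∘ w`. -/
def demStepL (n i : ℕ) (w : Equiv.Perm (Fin n)) : Equiv.Perm (Fin n) :=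
  if len n w < len n (simpleT n i * w) then simpleT n i * w else w

/-- The Demazure product of the word `l`: `s_{a_1} ∘ s_{a_2} ∘ ⋯ ∘ s_{a_p}`. -/
def demWord (n : ℕ) (l : List ℕ) : Equiv.Perm (Fin n) :=
  l.foldl (demStepR n) 1

/-- `w⁻¹ ∘ w = y` for the Demazure product: expressed via a reduced word `l` of `w`,
as `demWord (l.reverse ++ l) = y` (note `l.reverse` is a reduced word of `w⁻¹`). -/
def DemSelf (n : ℕ) (w y : Equiv.Perm (Fin n)) : Prop :=
  ∃ l : List ℕ, wordProd n l = w ∧ l.length = len n w ∧ demWord n (l.reverse ++ l) = y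

/-- `w` is an atom of the involution `y`: a minimal-length permutation with
`w⁻¹ ∘ w = y` under the Demazure product. -/
def IsAtomOf (n : ℕ) (y w : Equiv.Perm (Fin n)) : Prop :=
  DemSelf n w y ∧ ∀ w', DemSelf n w' y → len n w ≤ len n w'

/-- The number of cycles (2-cycles together with fixed points) of an involution `y`. -/
def cycCount (n : ℕ) (y : Equiv.Perm (Fin n)) : ℕ :=
  (Finset.univ.filter fun i : Fin n => i ≤ y i).card

/-- The minimal length of an involution word for `y`
(`y = s_{a_1} ⊳ ⋯ ⊳ s_{a_p}`, equivalently `y = demWord (a.reverse ++ a)`). -/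
def ihat (n : ℕ) (y : Equiv.Perm (Fin n)) : ℕ :=
  sInf {p | ∃ a : List ℕ, a.length = p ∧ demWord n (a.reverse ++ a) = y}

/-- Bruhat order on `S_n` via the subword property. -/
def BruhatLE (n : ℕ) (u v : Equiv.Perm (Fin n)) : Prop :=
  ∀ l : List ℕ, wordProd n l = v → l.length = len n v →
    ∃ l' : List ℕ, l'.Sublist l ∧ wordProd n l' = u ∧ l'.length = len n u

/-- `y` standardizes (as a word `b` on a finite alphabet of naturals) to the
permutation `y` of positions: `y i` is the rank of the letter `b i`. -/
def stdEq {k : ℕ} (b : Fin k → ℕ) (y : Equiv.Perm (Fin k)) : Prop :=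
  Function.Injective b ∧
    ∀ i, (y i : ℕ) = (Finset.univ.filter fun j => b j < b i).card

/-- `q` is an inverse block atom of the block involution `b`: a word on the same
alphabet whose standardization is an inverse atom of `std b`. -/
def IsInvBlockAtomOf {k : ℕ} (b q : Fin k → ℕ) : Prop :=
  Set.range q = Set.range b ∧
    ∃ y w : Equiv.Perm (Fin k), stdEq b y ∧ y * y = 1 ∧ stdEq q w ∧ IsAtomOf k y w⁻¹

/-- Positions `p` and `q` (0-indexed) lie in the same block of the composition `μ`. -/
def SameBlock (μ : List ℕ) (p q : ℕ) : Prop :=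
  ∀ k ≤ μ.length, ((μ.take k).sum ≤ p ↔ (μ.take k).sum ≤ q)

/-- The starting position (0-indexed) of the block of `μ` containing position `p`. -/
def blockStart (μ : List ℕ) (p : ℕ) : ℕ :=
  (Finset.range (μ.length + 1)).sup fun k =>
    if (μ.take k).sum ≤ p then (μ.take k).sum else 0

/-- The 0-Hecke action `π ∘_μ s_i` on `μ`-involutions: if the values `i, i+1` of `π`
lie in different blocks it is `s_i ∘ π`; if they lie in the same block `B` it is
`s_i ∘ π ∘ s_r`, where `r` is the position (global, 0-indexed) within the block
corresponding to the relative value of `i` in `B`. -/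
def muAct (n : ℕ) (μ : List ℕ) (π : Equiv.Perm (Fin n)) (i : ℕ) : Equiv.Perm (Fin n) :=
  if h : i + 1 < n then
    let a : Fin n := ⟨i, Nat.lt_of_succ_lt h⟩
    let b : Fin n := ⟨i + 1, h⟩
    if SameBlock μ ((π⁻¹ a : Fin n) : ℕ) ((π⁻¹ b : Fin n) : ℕ) then
      demStepR n (demStepL n i π)
        (blockStart μ ((π⁻¹ a : Fin n) : ℕ) +
          (Finset.univ.filter fun p' : Fin n =>
            SameBlock μ (p' : ℕ) ((π⁻¹ a : Fin n) : ℕ) ∧ (π p' : ℕ) < i).card)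
    else demStepL n i π
  else π

/-- `e ∘_μ s_{a_1} ∘_μ ⋯ ∘_μ s_{a_p}` for a word `l = (a_1, …, a_p)`. -/
def muWord (n : ℕ) (μ : List ℕ) (l : List ℕ) : Equiv.Perm (Fin n) :=
  l.foldl (muAct n μ) 1

/-- `ℓ_μ(π)`: the minimal length of a `μ`-word for `π`. -/
def lmu (n : ℕ) (μ : List ℕ) (π : Equiv.Perm (Fin n)) : ℕ :=
  sInf {p | ∃ l : List ℕ, l.length = p ∧ muWord n μ l = π}

/-- The `i`-th block of the one-line notation of `π` with respect to `μ`, as a word. -/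
def blockWord (n : ℕ) (μ : List ℕ) (π : Equiv.Perm (Fin n)) (i : Fin μ.length) :
    Fin (μ.get i) → ℕ :=
  fun j =>
    if h : (μ.take (i : ℕ)).sum + (j : ℕ) < n then
      (π ⟨(μ.take (i : ℕ)).sum + (j : ℕ), h⟩ : ℕ)
    else 0

/-- `π` is a `μ`-involution: `μ` is a composition of `n` and every block of `π`
standardizes to an involution. -/
def IsMuInv (n : ℕ) (μ : List ℕ) (π : Equiv.Perm (Fin n)) : Prop :=
  μ.sum = n ∧ (∀ x ∈ μ, 0 < x) ∧
    ∀ i : Fin μ.length,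
      ∃ y : Equiv.Perm (Fin (μ.get i)), stdEq (blockWord n μ π i) y ∧ y * y = 1

/-- `w` is a `μ`-atom of `π`: a minimal-length permutation one of whose reduced words
is a reduced `μ`-word for `π`. -/
def IsMuAtom (n : ℕ) (μ : List ℕ) (π w : Equiv.Perm (Fin n)) : Prop :=
  ∃ l : List ℕ, wordProd n l = w ∧ l.length = len n w ∧
    muWord n μ l = π ∧ l.length = lmu n μ π

/-- `ν` refines `μ`: every partial sum of `μ` is a partial sum of `ν`. -/
def Refines (ν μ : List ℕ) : Prop :=
  ∀ k ≤ μ.length, ∃ k' ≤ ν.length, (ν.take k').sum = (μ.take k).sum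

/-- `μ`-Bruhat order via the subword property on reduced `μ`-words. -/
def MuBruhatLE (n : ℕ) (μ : List ℕ) (π τ : Equiv.Perm (Fin n)) : Prop :=
  ∀ l : List ℕ, muWord n μ l = τ → l.length = lmu n μ τ →
    ∃ l' : List ℕ, l'.Sublist l ∧ muWord n μ l' = π ∧ l'.length = lmu n μ π

/-- The longest element `w_0` of `S_n`. -/
def longest (n : ℕ) : Equiv.Perm (Fin n) :=
  ⟨Fin.rev, Fin.rev, Fin.rev_rev, Fin.rev_rev⟩

/-- The divided difference operator `∂_i f = (f - s_i f)/(x_i - x_{i+1})`. -/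
def ddiff (n i : ℕ) (f : MvPolynomial (Fin n) ℚ) : MvPolynomial (Fin n) ℚ :=
  if h : ∃ hi : i + 1 < n, ∃ g : MvPolynomial (Fin n) ℚ,
      f - MvPolynomial.rename (⇑(simpleT n i)) f =
        g * (MvPolynomial.X (⟨i, Nat.lt_of_succ_lt hi⟩ : Fin n) -
          MvPolynomial.X (⟨i + 1, hi⟩ : Fin n))
  then h.choose_spec.choose else 0

/-- A choice of reduced word for `v`. -/
def aRedWord (n : ℕ) (v : Equiv.Perm (Fin n)) : List ℕ :=
  if h : ∃ l : List ℕ, wordProd n l = v ∧ l.length = len n v then h.choose else []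

/-- The Schubert polynomial of `w`: obtained from the staircase monomial
`S_{w_0} = x_1^{n-1} ⋯ x_{n-1}` by applying divided differences along a reduced
word of `w_0 w` (so that `w_0 · s_{a_1} ⋯ s_{a_p} = w`). -/
def schubert (n : ℕ) (w : Equiv.Perm (Fin n)) : MvPolynomial (Fin n) ℚ :=
  (aRedWord n (longest n * w)).foldl (fun f i => ddiff n i f)
    (∏ i : Fin n, MvPolynomial.X i ^ (n - 1 - (i : ℕ)))

/-- The involution Schubert polynomial `S^I_y = ∑_{w ∈ A(y)} S_w`. -/
def invSchubert (n : ℕ) (y : Equiv.Perm (Fin n)) : MvPolynomial (Fin n) ℚ :=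
  ∑ w ∈ Finset.univ.filter (fun w => IsAtomOf n y w), schubert n w

/-- The `μ`-involution Schubert polynomial `S^μ_π = ∑_{w ∈ A_μ(π)} S_w`. -/
def muSchubert (n : ℕ) (μ : List ℕ) (π : Equiv.Perm (Fin n)) : MvPolynomial (Fin n) ℚ :=
  ∑ w ∈ Finset.univ.filter (fun w => IsMuAtom n μ π w), schubert n w

/-- The parabolic (Young) subgroup `S_μ ≤ S_n`, generated by the simple
transpositions not crossing a block boundary of `μ`. -/
def parabolic (n : ℕ) (μ : List ℕ) : Subgroup (Equiv.Perm (Fin n)) :=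
  Subgroup.closure
    {g | ∃ i : ℕ, i + 1 < n ∧ (∀ k ≤ μ.length, (μ.take k).sum ≠ i + 1) ∧ g = simpleT n i}

/-- `z = t^I_{ab}(y)` nontrivially, encoded via atoms: some atom `v` of `y` satisfies
`v ⋖ v t_{ab}` and `v t_{ab}` is an atom of `z`. -/
def tOpI (n : ℕ) (y z : Equiv.Perm (Fin n)) (a b : Fin n) : Prop :=
  ∃ v : Equiv.Perm (Fin n), IsAtomOf n y v ∧
    len n (v * Equiv.swap a b) = len n v + 1 ∧ IsAtomOf n z (v * Equiv.swap a b)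

/-- The local move on one-line notations: a consecutive subsequence `c, a, b`
(with `a < b < c`) of `u` is replaced by `b, c, a` in `v`, all other entries equal. -/
def LocalMove (n : ℕ) (u v : Equiv.Perm (Fin n)) : Prop :=
  ∃ p : ℕ, ∃ hp : p + 2 < n, ∃ a b c : Fin n, a < b ∧ b < c ∧
    u ⟨p, by omega⟩ = c ∧ u ⟨p + 1, by omega⟩ = a ∧ u ⟨p + 2, hp⟩ = b ∧
    v ⟨p, by omega⟩ = b ∧ v ⟨p + 1, by omega⟩ = c ∧ v ⟨p + 2, hp⟩ = a ∧
    ∀ q : Fin n, (q : ℕ) ≠ p → (q : ℕ) ≠ p + 1 → (q : ℕ) ≠ p + 2 → u q = v q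

/-- The values `x, x'` form a (non-fixed-point) block cycle of the word `b`. -/
def Paired (m : ℕ) (b : Fin m → ℕ) (x x' : ℕ) : Prop :=
  ∃ y : Equiv.Perm (Fin m), stdEq b y ∧ ∃ i : Fin m, b i = x ∧ b (y i) = x' ∧ y i ≠ i

/-- `q` is an inverse block atom of the block involution obtained from `b` by
restricting its cycle structure to the value set of `q` (with unmatched values
becoming fixed points). -/
def RestrictedInvBlockAtom (m : ℕ) (b : Fin m → ℕ) (k : ℕ) (q : Fin k → ℕ) : Prop :=
  ∃ bL : Fin k → ℕ, ∃ yL : Equiv.Perm (Fin k),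
    stdEq bL yL ∧ yL * yL = 1 ∧ Set.range bL = Set.range q ∧
    (∀ i j : Fin k, (yL i = j ∧ i ≠ j) ↔ Paired m b (bL i) (bL j)) ∧
    IsInvBlockAtomOf bL q

end

/-!
The left and right 0-Hecke actions `w ↦ s_i ∘ w` and `w ↦ w ∘ s_j` on `S_n` commute: this is
a case check on lengths, the only delicate case being settled by the exchange property of
adjacent transpositions. Consequently the Demazure product of a concatenation `l ++ m` only
depends on the Demazure products of `l` and `m`, and that of a reversed word is the inverse.
So for any word `a`, the involution word `a.reverse ++ a` computes `v⁻¹ ∘ v` with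
`v = demWord a`, as does every reduced word of `v`, and `len v ≤ a.length` with equality
exactly when `a` is a reduced word of `v`. Comparing the two minimality conditions (of `ihat y`
and of the length of an atom) gives the bijection; disjointness holds because a word has only
one product.
-/

open Equiv

variable {n : ℕ}

lemma simpleT_of_not_lt {i : ℕ} (h : ¬i + 1 < n) : simpleT n i = 1 := dif_neg h

lemma simpleT_eq_swap {i : ℕ} (h : i + 1 < n) :
    simpleT n i = swap ⟨i, by omega⟩ ⟨i + 1, h⟩ := dif_pos h

@[simp]
lemma simpleT_mul_self (i : ℕ) : simpleT n i * simpleT n i = 1 := by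
  by_cases h : i + 1 < n
  · rw [simpleT_eq_swap h, swap_mul_self]
  · rw [simpleT_of_not_lt h, mul_one]

@[simp]
lemma simpleT_inv (i : ℕ) : (simpleT n i)⁻¹ = simpleT n i :=
  inv_eq_of_mul_eq_one_right (simpleT_mul_self i)

@[simp]
lemma mul_simpleT_mul_simpleT (w : Perm (Fin n)) (i : ℕ) :
    w * simpleT n i * simpleT n i = w := by
  rw [mul_assoc, simpleT_mul_self, mul_one]

lemma wordProd_cons (i : ℕ) (l : List ℕ) :
    wordProd n (i :: l) = simpleT n i * wordProd n l := by
  simp [wordProd]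

lemma wordProd_concat (l : List ℕ) (i : ℕ) :
    wordProd n (l ++ [i]) = wordProd n l * simpleT n i := by
  simp [wordProd]

lemma wordProd_reverse (l : List ℕ) : wordProd n l.reverse = (wordProd n l)⁻¹ := by
  induction l with
  | nil => exact inv_one.symm
  | cons i l ih =>
    rw [List.reverse_cons, wordProd_concat, ih, wordProd_cons, mul_inv_rev, simpleT_inv]

lemma apply_lt_or_apply_gt {i : ℕ} (h : i + 1 < n) (w : Perm (Fin n)) :
    w ⟨i, by omega⟩ < w ⟨i + 1, h⟩ ∨ w ⟨i + 1, h⟩ < w ⟨i, by omega⟩ :=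
  lt_or_gt_of_ne (w.injective.ne (Fin.ne_of_val_ne (Nat.succ_ne_self i).symm))

def inversions (w : Perm (Fin n)) : Finset (Fin n × Fin n) :=
  Finset.univ.filter fun p => p.1 < p.2 ∧ w p.2 < w p.1

lemma inversions_one : inversions (1 : Perm (Fin n)) = ∅ := by
  refine Finset.eq_empty_of_forall_notMem fun p hp => ?_
  obtain ⟨-, hpq, hqp⟩ := Finset.mem_filter.1 hp
  exact hpq.not_gt hqp

lemma inversions_mul_simpleT {i : ℕ} (h : i + 1 < n) {w : Perm (Fin n)}
    (hw : w ⟨i, by omega⟩ < w ⟨i + 1, h⟩) :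
    inversions (w * simpleT n i) = insert (⟨i, by omega⟩, ⟨i + 1, h⟩)
      ((inversions w).map ((simpleT n i).prodCongr (simpleT n i)).toEmbedding) := by
  ext ⟨p, q⟩
  simp only [inversions, Finset.mem_insert, Finset.mem_map_equiv, Finset.mem_filter,
    Finset.mem_univ, true_and, Perm.mul_apply, Prod.mk.injEq, simpleT_eq_swap h, prodCongr_symm,
    prodCongr_apply, Prod.map_apply, symm_swap, swap_apply_def]
  rw [Fin.lt_def] at hw
  split_ifs <;> simp_all only [Fin.ext_iff, Fin.lt_def] <;> grind

lemma card_inversions_mul_simpleT_of_lt {i : ℕ} (h : i + 1 < n) {w : Perm (Fin n)}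
    (hw : w ⟨i, by omega⟩ < w ⟨i + 1, h⟩) :
    (inversions (w * simpleT n i)).card = (inversions w).card + 1 := by
  rw [inversions_mul_simpleT h hw, Finset.card_insert_of_notMem, Finset.card_map]
  simp [inversions, simpleT_eq_swap h]

lemma card_inversions_mul_simpleT_of_gt {i : ℕ} (h : i + 1 < n) {w : Perm (Fin n)}
    (hw : w ⟨i + 1, h⟩ < w ⟨i, by omega⟩) :
    (inversions (w * simpleT n i)).card + 1 = (inversions w).card := by
  have := card_inversions_mul_simpleT_of_lt h (w := w * simpleT n i) (by
    simpa [simpleT_eq_swap h] using hw)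
  rwa [mul_simpleT_mul_simpleT, eq_comm] at this

lemma card_inversions_wordProd_le (l : List ℕ) :
    (inversions (wordProd n l)).card ≤ l.length := by
  induction l using List.reverseRecOn with
  | nil => simp [wordProd, inversions_one]
  | append_singleton l i ih =>
    rw [wordProd_concat, List.length_append, List.length_singleton]
    by_cases h : i + 1 < n
    · rcases apply_lt_or_apply_gt h (wordProd n l) with hw | hw
      · rw [card_inversions_mul_simpleT_of_lt h hw]; omega
      · have := card_inversions_mul_simpleT_of_gt h hw; omega
    · rw [simpleT_of_not_lt h, mul_one]; omega

lemma exists_descent {w : Perm (Fin n)} (hw : w ≠ 1) :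
    ∃ i, ∃ h : i + 1 < n, w ⟨i + 1, h⟩ < w ⟨i, by omega⟩ := by
  obtain _ | m := n
  · exact absurd (Subsingleton.elim w 1) hw
  by_contra! hasc
  refine hw (Equiv.ext fun x => congrFun (StrictMono.eq_id ?_) x)
  refine Fin.strictMono_iff_lt_succ.2 fun i => (hasc i (by omega)).lt_of_ne ?_
  exact w.injective.ne (Fin.ne_of_val_ne (by simp))

lemma exists_wordProd_eq_length_eq_card (w : Perm (Fin n)) :
    ∃ l, wordProd n l = w ∧ l.length = (inversions w).card := by
  induction hk : (inversions w).card using Nat.strong_induction_on generalizing w with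
  | _ k ih =>
    by_cases hw : w = 1
    · subst hw; exact ⟨[], rfl, by simp [← hk, inversions_one]⟩
    obtain ⟨i, h, hdesc⟩ := exists_descent hw
    have hcard := card_inversions_mul_simpleT_of_gt h hdesc
    obtain ⟨l, hl, hlen⟩ := ih _ (by omega) (w * simpleT n i) rfl
    exact ⟨l ++ [i], by rw [wordProd_concat, hl, mul_simpleT_mul_simpleT], by simp; omega⟩

lemma len_le_length {l : List ℕ} {w : Perm (Fin n)} (h : wordProd n l = w) :
    len n w ≤ l.length :=
  Nat.sInf_le ⟨l, rfl, h⟩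

lemma len_eq_card_inversions (w : Perm (Fin n)) : len n w = (inversions w).card := by
  obtain ⟨l, hl, hlen⟩ := exists_wordProd_eq_length_eq_card w
  refine le_antisymm (hlen ▸ len_le_length hl) ?_
  obtain ⟨m, hm, hmw⟩ := Nat.sInf_mem (⟨l.length, l, rfl, hl⟩ :
    {p | ∃ l : List ℕ, l.length = p ∧ wordProd n l = w}.Nonempty)
  calc (inversions w).card = (inversions (wordProd n m)).card := by rw [hmw]
    _ ≤ m.length := card_inversions_wordProd_le m
    _ = len n w := hm

lemma exists_reduced_word (w : Perm (Fin n)) : ∃ l, wordProd n l = w ∧ l.length = len n w := by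
  simpa [len_eq_card_inversions] using exists_wordProd_eq_length_eq_card w

lemma len_one : len n 1 = 0 := by
  simp [len_eq_card_inversions, inversions_one]

lemma len_inv (w : Perm (Fin n)) : len n w⁻¹ = len n w := by
  suffices h : ∀ w : Perm (Fin n), len n w⁻¹ ≤ len n w from
    le_antisymm (h w) (by simpa using h w⁻¹)
  intro w
  obtain ⟨l, hl, hlen⟩ := exists_reduced_word w
  exact hlen ▸ List.length_reverse (as := l) ▸ len_le_length (by rw [wordProd_reverse, hl])

lemma len_mul_simpleT_le (w : Perm (Fin n)) (i : ℕ) :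
    len n (w * simpleT n i) ≤ len n w + 1 := by
  obtain ⟨l, hl, hlen⟩ := exists_reduced_word w
  simpa [hlen] using len_le_length (l := l ++ [i]) (by rw [wordProd_concat, hl])

lemma len_mul_simpleT_of_lt {i : ℕ} (h : i + 1 < n) {w : Perm (Fin n)}
    (hw : w ⟨i, by omega⟩ < w ⟨i + 1, h⟩) : len n (w * simpleT n i) = len n w + 1 := by
  simpa [len_eq_card_inversions] using card_inversions_mul_simpleT_of_lt h hw

lemma len_mul_simpleT_of_gt {i : ℕ} (h : i + 1 < n) {w : Perm (Fin n)}
    (hw : w ⟨i + 1, h⟩ < w ⟨i, by omega⟩) : len n (w * simpleT n i) + 1 = len n w := by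
  simpa [len_eq_card_inversions] using card_inversions_mul_simpleT_of_gt h hw

lemma len_mul_simpleT_cases {i : ℕ} (h : i + 1 < n) (w : Perm (Fin n)) :
    len n (w * simpleT n i) = len n w + 1 ∨ len n (w * simpleT n i) + 1 = len n w :=
  (apply_lt_or_apply_gt h w).imp (len_mul_simpleT_of_lt h) (len_mul_simpleT_of_gt h)

lemma len_inv_mul_simpleT (w : Perm (Fin n)) (i : ℕ) :
    len n (w⁻¹ * simpleT n i) = len n (simpleT n i * w) := by
  rw [← len_inv, mul_inv_rev, inv_inv, simpleT_inv]

lemma len_simpleT_mul_cases {i : ℕ} (h : i + 1 < n) (w : Perm (Fin n)) :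
    len n (simpleT n i * w) = len n w + 1 ∨ len n (simpleT n i * w) + 1 = len n w := by
  simpa [len_inv_mul_simpleT, len_inv] using len_mul_simpleT_cases h w⁻¹

lemma simpleT_mul_eq_mul_simpleT {i j : ℕ} (hi : i + 1 < n) (hj : j + 1 < n) {x : Perm (Fin n)}
    (hx : len n x < len n (x * simpleT n j))
    (hix : len n (simpleT n i * x * simpleT n j) < len n (simpleT n i * x)) :
    simpleT n i * x = x * simpleT n j := by
  have hasc := (apply_lt_or_apply_gt hj x).resolve_right fun hw => by
    have := len_mul_simpleT_of_gt hj hw; omega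
  have hdesc := (apply_lt_or_apply_gt hj (simpleT n i * x)).resolve_left fun hw => by
    have := len_mul_simpleT_of_lt hj hw; omega
  -- an adjacent transposition only reverses the relative order of the values `i < i + 1`
  have hval : x ⟨j, by omega⟩ = ⟨i, by omega⟩ ∧ x ⟨j + 1, hj⟩ = ⟨i + 1, hi⟩ := by
    rw [Perm.mul_apply, Perm.mul_apply, simpleT_eq_swap hi] at hdesc
    simp only [swap_apply_def] at hdesc
    rw [Fin.lt_def] at hasc
    split_ifs at hdesc <;> simp_all only [Fin.ext_iff, Fin.lt_def] <;> grind
  rw [simpleT_eq_swap hj, mul_swap_eq_swap_mul, hval.1, hval.2, simpleT_eq_swap hi]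

lemma demStepR_of_not_lt {i : ℕ} (h : ¬i + 1 < n) (w : Perm (Fin n)) : demStepR n w i = w := by
  simp [demStepR, simpleT_of_not_lt h]

lemma demStepL_of_not_lt {i : ℕ} (h : ¬i + 1 < n) (w : Perm (Fin n)) : demStepL n i w = w := by
  simp [demStepL, simpleT_of_not_lt h]

lemma demStepR_one (i : ℕ) : demStepR n 1 i = demStepL n i 1 := by
  simp [demStepR, demStepL]

lemma demStepR_inv (w : Perm (Fin n)) (i : ℕ) : demStepR n w⁻¹ i = (demStepL n i w)⁻¹ := by
  unfold demStepR demStepL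
  rw [len_inv, len_inv_mul_simpleT]
  split_ifs <;> simp

lemma demStepL_demStepR (i j : ℕ) (x : Perm (Fin n)) :
    demStepL n i (demStepR n x j) = demStepR n (demStepL n i x) j := by
  by_cases hi : i + 1 < n
  swap
  · simp [demStepL_of_not_lt hi]
  by_cases hj : j + 1 < n
  swap
  · simp [demStepR_of_not_lt hj]
  have hL := len_simpleT_mul_cases hi x
  have hR := len_mul_simpleT_cases hj x
  have hLR := len_simpleT_mul_cases hi (x * simpleT n j)
  have hRL := len_mul_simpleT_cases hj (simpleT n i * x)
  rw [← mul_assoc] at hLR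
  -- comparing lengths settles every case except
  -- `len (s_i x s_j) = len x < len (s_i x), len (x s_j)`, where the two sides are `x s_j` and
  -- `s_i x`, equal by the exchange property
  unfold demStepL demStepR
  split_ifs <;> (try simp only [← mul_assoc] at *) <;> first
    | rfl
    | omega
    | exact simpleT_mul_eq_mul_simpleT hi hj ‹_› (by omega)
    | exact (simpleT_mul_eq_mul_simpleT hi hj ‹_› (by omega)).symm

lemma foldl_demStepR_demStepL (i : ℕ) (x : Perm (Fin n)) (l : List ℕ) :
    l.foldl (demStepR n) (demStepL n i x) = demStepL n i (l.foldl (demStepR n) x) := by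
  induction l generalizing x with
  | nil => rfl
  | cons j l ih => rw [List.foldl_cons, List.foldl_cons, ← demStepL_demStepR, ih]

lemma demWord_nil : demWord n [] = 1 := rfl

lemma demWord_cons (i : ℕ) (l : List ℕ) : demWord n (i :: l) = demStepL n i (demWord n l) := by
  rw [demWord, List.foldl_cons, demStepR_one, foldl_demStepR_demStepL, demWord]

lemma demWord_append (l m : List ℕ) : demWord n (l ++ m) = m.foldl (demStepR n) (demWord n l) :=
  List.foldl_append

lemma demWord_concat (l : List ℕ) (i : ℕ) : demWord n (l ++ [i]) = demStepR n (demWord n l) i :=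
  demWord_append l [i]

lemma demWord_append_eq_foldr (l m : List ℕ) :
    demWord n (l ++ m) = l.foldr (demStepL n) (demWord n m) := by
  induction l with
  | nil => rfl
  | cons i l ih => rw [List.cons_append, demWord_cons, ih, List.foldr_cons]

lemma demWord_append_congr {l l' m m' : List ℕ} (hl : demWord n l = demWord n l')
    (hm : demWord n m = demWord n m') : demWord n (l ++ m) = demWord n (l' ++ m') := by
  rw [demWord_append, hl, ← demWord_append, demWord_append_eq_foldr, hm,
    ← demWord_append_eq_foldr]

lemma demWord_reverse (l : List ℕ) : demWord n l.reverse = (demWord n l)⁻¹ := by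
  induction l with
  | nil => rw [List.reverse_nil, demWord_nil, inv_one]
  | cons i l ih => rw [List.reverse_cons, demWord_concat, ih, demStepR_inv, demWord_cons]

lemma len_demStepR_le (w : Perm (Fin n)) (i : ℕ) : len n (demStepR n w i) ≤ len n w + 1 := by
  unfold demStepR
  split_ifs
  · exact len_mul_simpleT_le w i
  · omega

lemma len_demWord_le (l : List ℕ) : len n (demWord n l) ≤ l.length := by
  induction l using List.reverseRecOn with
  | nil => rw [demWord_nil, len_one]; rfl
  | append_singleton l i ih =>
    have := len_demStepR_le (demWord n l) i
    rw [demWord_concat, List.length_append, List.length_singleton]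
    omega

lemma demWord_eq_wordProd_of_len_demWord {l : List ℕ} (h : len n (demWord n l) = l.length) :
    demWord n l = wordProd n l := by
  induction l using List.reverseRecOn with
  | nil => rfl
  | append_singleton l i ih =>
    rw [demWord_concat, List.length_append, List.length_singleton] at h
    have hl := len_demWord_le (n := n) l
    rw [demWord_concat, wordProd_concat]
    unfold demStepR at h ⊢
    split_ifs at h ⊢ with hi
    · have := len_mul_simpleT_le (demWord n l) i
      rw [ih (by omega)]
    · omega

lemma demWord_eq_wordProd_of_reduced {l : List ℕ} (h : l.length = len n (wordProd n l)) :
    demWord n l = wordProd n l := by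
  induction l using List.reverseRecOn with
  | nil => rfl
  | append_singleton l i ih =>
    rw [wordProd_concat, List.length_append, List.length_singleton] at h
    have hl : len n (wordProd n l) ≤ l.length := len_le_length rfl
    have := len_mul_simpleT_le (wordProd n l) i
    rw [demWord_concat, wordProd_concat, ih (by omega), demStepR, if_pos (by omega)]

lemma demWord_reverse_append_congr {l m : List ℕ} (h : demWord n l = demWord n m) :
    demWord n (l.reverse ++ l) = demWord n (m.reverse ++ m) :=
  demWord_append_congr (by rw [demWord_reverse, demWord_reverse, h]) h

lemma demSelf_demWord {a : List ℕ} {y : Perm (Fin n)} (h : demWord n (a.reverse ++ a) = y) :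
    DemSelf n (demWord n a) y := by
  obtain ⟨r, hr, hrl⟩ := exists_reduced_word (demWord n a)
  have hra : demWord n r = demWord n a := by
    rw [demWord_eq_wordProd_of_reduced (by rw [hr, hrl]), hr]
  exact ⟨r, hr, hrl, (demWord_reverse_append_congr hra).trans h⟩

lemma ihat_le_length {a : List ℕ} {y : Perm (Fin n)} (h : demWord n (a.reverse ++ a) = y) :
    ihat n y ≤ a.length :=
  Nat.sInf_le ⟨a, rfl, h⟩

lemma ihat_le_len_of_demSelf {w y : Perm (Fin n)} (h : DemSelf n w y) : ihat n y ≤ len n w := by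
  obtain ⟨l, -, hl, hly⟩ := h
  exact hl ▸ ihat_le_length hly

lemma exists_length_eq_ihat {a : List ℕ} {y : Perm (Fin n)}
    (h : demWord n (a.reverse ++ a) = y) :
    ∃ b : List ℕ, demWord n (b.reverse ++ b) = y ∧ b.length = ihat n y := by
  obtain ⟨b, hb, hby⟩ := Nat.sInf_mem (⟨a.length, a, rfl, h⟩ :
    {p | ∃ b : List ℕ, b.length = p ∧ demWord n (b.reverse ++ b) = y}.Nonempty)
  exact ⟨b, hby, hb⟩

theorem reduced_involution_words_general (n : ℕ) (y : Equiv.Perm (Fin n)) :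
    (∀ a : List ℕ,
      (demWord n (a.reverse ++ a) = y ∧ a.length = ihat n y) ↔
        ∃ w : Equiv.Perm (Fin n), IsAtomOf n y w ∧ wordProd n a = w ∧
          a.length = len n w) ∧
    (∀ w₁ w₂ : Equiv.Perm (Fin n), IsAtomOf n y w₁ → IsAtomOf n y w₂ → w₁ ≠ w₂ →
      ∀ a : List ℕ, ¬(wordProd n a = w₁ ∧ wordProd n a = w₂)) := by
  refine ⟨fun a => ⟨?_, ?_⟩, fun w₁ w₂ _ _ hne a ⟨h₁, h₂⟩ => hne (h₁.symm.trans h₂)⟩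
  · rintro ⟨hay, ha⟩
    have hself := demSelf_demWord hay
    have hlen : len n (demWord n a) = a.length :=
      le_antisymm (len_demWord_le a) (ha ▸ ihat_le_len_of_demSelf hself)
    refine ⟨demWord n a, ⟨hself, fun w' hw' => ?_⟩,
      (demWord_eq_wordProd_of_len_demWord hlen).symm, hlen.symm⟩
    exact hlen ▸ ha ▸ ihat_le_len_of_demSelf hw'
  · rintro ⟨w, ⟨⟨l, hl, hll, hly⟩, hmin⟩, rfl, ha⟩
    have hay : demWord n (a.reverse ++ a) = y := by
      refine (demWord_reverse_append_congr ?_).trans hly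
      rw [demWord_eq_wordProd_of_reduced ha, demWord_eq_wordProd_of_reduced (hl ▸ hll), hl]
    obtain ⟨b, hby, hb⟩ := exists_length_eq_ihat hay
    refine ⟨hay, le_antisymm ?_ (ihat_le_length hay)⟩
    calc a.length = len n (wordProd n a) := ha
      _ ≤ len n (demWord n b) := hmin _ (demSelf_demWord hby)
      _ ≤ b.length := len_demWord_le b
      _ = ihat n y := hb

/-- The set of reduced involution words of `y` is the disjoint union, over atoms `w`
of `y`, of the sets of reduced words of `w`. -/
theorem reduced_involution_words (n : ℕ) (y : Equiv.Perm (Fin n)) (hy : y * y = 1) :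
    (∀ a : List ℕ,
      (demWord n (a.reverse ++ a) = y ∧ a.length = ihat n y) ↔
        ∃ w : Equiv.Perm (Fin n), IsAtomOf n y w ∧ wordProd n a = w ∧
          a.length = len n w) ∧
    (∀ w₁ w₂ : Equiv.Perm (Fin n), IsAtomOf n y w₁ → IsAtomOf n y w₂ → w₁ ≠ w₂ →
      ∀ a : List ℕ, ¬(wordProd n a = w₁ ∧ wordProd n a = w₂)) :=
  reduced_involution_words_general n y
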